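/- Fix an integer n ≥ 3 and a nonempty subset A ⊂ {0, 1, …, n−1}, and let C_{n,A} = {Σ_{j=1}^∞ a_j/n^j : a_j ∈ A for all j} ⊂ ℝ. Let G_n denote the group of integers modulo n and fix a positive integer k. Suppose that {(a_0 − a_1, a_0 − a_2, …, a_0 − a_k) mod n : a_0, …, a_k ∈ A} = (G_n)^k. Then for every nonempty compact set E ⊂ ℝ, the lower Minkowski dimension satisfies dim_m(C_{n,A} + E) ≥ k/(k+1) + dim_m(E)/(k+1). -/

import Mathlib

open Filter Set Pointwise

/-- The minimal number of intervals of length `δ` needed to cover `A ⊆ ℝ`. -/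
noncomputable def coverNumber (A : Set ℝ) (δ : ℝ) : ℕ :=
  sInf {N : ℕ | ∃ C : Finset ℝ, C.card = N ∧ A ⊆ ⋃ x ∈ C, Set.Icc x (x + δ)}

/-- The lower Minkowski dimension of a set `A ⊆ ℝ`: the liminf as `δ → 0⁺` of
`log N(A, δ) / log (1/δ)`. -/
noncomputable def lowerMinkDim (A : Set ℝ) : ℝ :=
  liminf (fun δ : ℝ => Real.log (coverNumber A δ) / Real.log (1 / δ)) (nhdsWithin 0 (Set.Ioi 0))

/-- The Cantor-like set `C_{n,A} = {∑_{j≥1} aⱼ n^{-j} : aⱼ ∈ A}`. -/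
def digitCantor (n : ℕ) (A : Finset ℕ) : Set ℝ :=
  {x | ∃ a : ℕ → ℕ, (∀ j, a j ∈ A) ∧ x = ∑' j : ℕ, (a j : ℝ) / (n : ℝ) ^ (j + 1)}


/-!
Fix `δ` and `m` with `n ^ m ≤ 1 / δ < n ^ (m + 1)`, a `δ`-separated set `S ⊆ E` that is
`δ`-dense in `E`, and an optimal cover `𝒞` of `C_{n,A} + E` by intervals of length `δ`.
The hypothesis on differences gives, for each `v ∈ G_nᵏ`, digits `a₀(v), a₁(v), …, a_k(v) ∈ A`
with `a₀(v) - aᵢ(v) ≡ vᵢ (mod n)`. For `t ∈ (G_nᵏ)ᵐ` let `xᵢ(t) ∈ C_{n,A}` have the digits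
`aᵢ(t₁), …, aᵢ(tₘ)` followed by a fixed digit. Then `nᵐ (x₀(t) - xᵢ(t))` is the integer
`∑ⱼ (a₀ - aᵢ)(tⱼ) n^(m-j)`, and these `k` integers determine `t`: reducing them modulo `n`
recovers `tₘ`, after which one subtracts, divides by `n` and repeats. Send
`(s, t) ∈ S × (G_nᵏ)ᵐ` to the `k + 1` intervals of `𝒞` containing `x₀(t) + s, …, x_k(t) + s`.
On a fibre the `k` integers vary by at most `2` and `s` is determined by `t`, so fibres have at
most `5ᵏ` points. Hence `N(E, δ) δ⁻ᵏ ≲ N(C_{n,A} + E, δ)ᵏ⁺¹`, and taking logarithms and the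
`liminf` gives the bound.
-/

open Bornology Topology

lemma coverNumber_le_card {X : Set ℝ} {δ : ℝ} {C : Finset ℝ}
    (h : X ⊆ ⋃ x ∈ C, Icc x (x + δ)) : coverNumber X δ ≤ C.card :=
  Nat.sInf_le ⟨C, rfl, h⟩

lemma exists_cover_card_le_of_subset_Icc {X : Set ℝ} {a b δ : ℝ} (hδ : 0 < δ)
    (hX : X ⊆ Icc a b) :
    ∃ C : Finset ℝ, C.card ≤ ⌈(b - a) / δ⌉₊ + 1 ∧ X ⊆ ⋃ x ∈ C, Icc x (x + δ) := by
  refine ⟨(Finset.range (⌈(b - a) / δ⌉₊ + 1)).image fun i : ℕ => a + i * δ,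
    Finset.card_image_le.trans (Finset.card_range _).le, fun y hy => ?_⟩
  obtain ⟨hay, hyb⟩ := hX hy
  have hq : 0 ≤ (y - a) / δ := div_nonneg (sub_nonneg.2 hay) hδ.le
  have hlow := (le_div_iff₀ hδ).1 (Nat.floor_le hq)
  have hupp := (div_lt_iff₀ hδ).1 (Nat.lt_floor_add_one ((y - a) / δ))
  simp only [Finset.mem_image, Finset.mem_range, mem_iUnion, exists_prop]
  refine ⟨_, ⟨⌊(y - a) / δ⌋₊, ?_, rfl⟩, ?_, ?_⟩
  · exact Nat.lt_succ_of_le ((Nat.floor_le_floor (by gcongr)).trans (Nat.floor_le_ceil _))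
  all_goals linarith

lemma coverNumber_le_of_subset_Icc {X : Set ℝ} {a b δ : ℝ} (hδ : 0 < δ) (hX : X ⊆ Icc a b) :
    coverNumber X δ ≤ ⌈(b - a) / δ⌉₊ + 1 :=
  let ⟨_, hC, hXC⟩ := exists_cover_card_le_of_subset_Icc hδ hX
  (coverNumber_le_card hXC).trans hC

lemma exists_card_eq_coverNumber {X : Set ℝ} (hX : IsBounded X) {δ : ℝ} (hδ : 0 < δ) :
    ∃ C : Finset ℝ, C.card = coverNumber X δ ∧ X ⊆ ⋃ x ∈ C, Icc x (x + δ) :=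
  let ⟨C, _, hC⟩ := exists_cover_card_le_of_subset_Icc hδ hX.subset_Icc_sInf_sSup
  Nat.sInf_mem (s := {N | ∃ C : Finset ℝ, C.card = N ∧ X ⊆ ⋃ x ∈ C, Icc x (x + δ)})
    ⟨C.card, C, rfl, hC⟩

lemma one_le_coverNumber {X : Set ℝ} (hX : IsBounded X) (hne : X.Nonempty) {δ : ℝ}
    (hδ : 0 < δ) : 1 ≤ coverNumber X δ := by
  obtain ⟨C, hC, hXC⟩ := exists_card_eq_coverNumber hX hδ
  obtain ⟨x, hx⟩ := hne
  obtain ⟨c, hc, -⟩ := mem_iUnion₂.1 (hXC hx)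
  exact hC ▸ Finset.card_pos.2 ⟨c, hc⟩

lemma exists_isSeparated_coverNumber_le {X : Set ℝ} (hX : IsBounded X) {δ : ℝ} (hδ : 0 < δ) :
    ∃ S : Finset ℝ, ↑S ⊆ X ∧ Metric.IsSeparated (ENNReal.ofReal δ) (S : Set ℝ) ∧
      coverNumber X δ ≤ 2 * S.card := by
  set ε := δ.toNNReal
  have hpack : Metric.packingNumber ε X ≠ ⊤ := by
    obtain ⟨C, -, hCfin, hC⟩ := Metric.exists_finite_isCover_of_isCompact_closure
      (ε := ε / 2) (by simpa [ε] using hδ) hX.isCompact_closure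
    refine ne_top_of_le_ne_top hCfin.encard_lt_top.ne ?_
    calc Metric.packingNumber ε X = Metric.packingNumber (2 * (ε / 2)) X := by
          rw [mul_div_cancel₀ _ two_ne_zero]
      _ ≤ Metric.externalCoveringNumber (ε / 2) X :=
          Metric.packingNumber_two_mul_le_externalCoveringNumber _ _
      _ ≤ C.encard := hC.externalCoveringNumber_le_encard
  have hfin : (Metric.maximalSeparatedSet ε X).Finite :=
    Set.encard_ne_top_iff.1 (Metric.encard_maximalSeparatedSet hpack ▸ hpack)
  refine ⟨hfin.toFinset, by simpa using Metric.maximalSeparatedSet_subset,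
    by simpa [ENNReal.ofReal] using Metric.isSeparated_maximalSeparatedSet, ?_⟩
  have hcov := Metric.isCover_iff_subset_iUnion_closedBall.1
    (Metric.isCover_maximalSeparatedSet hpack)
  -- each ball `[y - δ, y + δ]` is the union of two intervals of length `δ`
  calc coverNumber X δ ≤ (hfin.toFinset.image (· - δ) ∪ hfin.toFinset).card := by
        refine coverNumber_le_card fun x hx => ?_
        obtain ⟨y, hy, hxy⟩ := mem_iUnion₂.1 (hcov hx)
        rw [Real.closedBall_eq_Icc, Real.coe_toNNReal _ hδ.le] at hxy
        simp only [Finset.mem_union, Finset.mem_image, Set.Finite.mem_toFinset, mem_iUnion,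
          exists_prop]
        rcases le_total x y with hxy' | hxy'
        · exact ⟨y - δ, Or.inl ⟨y, hy, rfl⟩, hxy.1, by linarith⟩
        · exact ⟨y, Or.inr hy, hxy', hxy.2⟩
    _ ≤ 2 * hfin.toFinset.card := by
        rw [two_mul]
        exact (Finset.card_union_le _ _).trans (Nat.add_le_add_right Finset.card_image_le _)

noncomputable def digitExpansion (n : ℕ) (d : ℕ → ℕ) : ℝ :=
  ∑' j : ℕ, (d j : ℝ) / (n : ℝ) ^ (j + 1)

section DigitExpansion

variable {n : ℕ} {d d' : ℕ → ℕ}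

lemma natCast_div_pow_succ_le_inv_pow {c : ℕ} (hc : c < n) (j : ℕ) :
    (c : ℝ) / n ^ (j + 1) ≤ (n : ℝ)⁻¹ ^ j := by
  have hn : (0 : ℝ) < n := by exact_mod_cast (Nat.zero_le c).trans_lt hc
  rw [inv_pow, pow_succ, div_le_iff₀ (by positivity), inv_mul_eq_div,
    mul_div_cancel_left₀ _ (by positivity)]
  exact_mod_cast hc.le

lemma summable_geometric_inv_natCast (hn : 2 ≤ n) : Summable fun j : ℕ => (n : ℝ)⁻¹ ^ j :=
  summable_geometric_of_lt_one (by positivity) (inv_lt_one_of_one_lt₀ (by exact_mod_cast hn))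

lemma summable_digit_div_pow (hn : 2 ≤ n) (hd : ∀ j, d j < n) :
    Summable fun j : ℕ => (d j : ℝ) / (n : ℝ) ^ (j + 1) :=
  (summable_geometric_inv_natCast hn).of_nonneg_of_le (fun _ => by positivity)
    fun j => natCast_div_pow_succ_le_inv_pow (hd j) j

lemma isBounded_digitCantor {A : Finset ℕ} (hn : 2 ≤ n) (hA : A ⊆ Finset.range n) :
    Bornology.IsBounded (digitCantor n A) := by
  refine (Metric.isBounded_Icc (0 : ℝ) (∑' j : ℕ, (n : ℝ)⁻¹ ^ j)).subset ?_
  rintro _ ⟨d, hd, rfl⟩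
  have hdn : ∀ j, d j < n := fun j => Finset.mem_range.1 (hA (hd j))
  exact ⟨tsum_nonneg fun j => by positivity, (summable_digit_div_pow hn hdn).tsum_le_tsum
    (fun j => natCast_div_pow_succ_le_inv_pow (hdn j) j) (summable_geometric_inv_natCast hn)⟩

lemma pow_mul_digitExpansion_sub (hn : 2 ≤ n) (hd : ∀ j, d j < n) (hd' : ∀ j, d' j < n)
    {m : ℕ} (h : ∀ j, m ≤ j → d j = d' j) :
    (n : ℝ) ^ m * (digitExpansion n d - digitExpansion n d') =
      ∑ j ∈ Finset.range m, ((d j : ℝ) - d' j) * (n : ℝ) ^ (m - 1 - j) := by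
  rw [digitExpansion, digitExpansion,
    ← (summable_digit_div_pow hn hd).tsum_sub (summable_digit_div_pow hn hd'),
    tsum_eq_sum (s := Finset.range m), Finset.mul_sum]
  · refine Finset.sum_congr rfl fun j hj => ?_
    have hpow : (n : ℝ) ^ m = n ^ (m - 1 - j) * n ^ (j + 1) := by
      rw [← pow_add]; congr 1; have := Finset.mem_range.1 hj; omega
    have : (n : ℝ) ≠ 0 := by positivity
    rw [hpow]; field_simp
  · intro j hj
    rw [h j (by simpa using hj), sub_self]

end DigitExpansion

def padDigits {m : ℕ} (d : Fin m → ℕ) (b : ℕ) : ℕ → ℕ :=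
  fun j => if h : j < m then d ⟨j, h⟩ else b

lemma padDigits_mem {m : ℕ} {d : Fin m → ℕ} {b : ℕ} {s : Set ℕ} (hd : ∀ j, d j ∈ s)
    (hb : b ∈ s) (j : ℕ) : padDigits d b j ∈ s := by
  unfold padDigits
  split_ifs
  exacts [hd _, hb]

lemma intCast_sum_eq_pow_mul_digitExpansion_sub {n m b : ℕ} (hn : 2 ≤ n) {d d' : Fin m → ℕ}
    (hd : ∀ j, d j < n) (hd' : ∀ j, d' j < n) (hb : b < n) :
    ((∑ j, ((d j : ℤ) - d' j) * (n : ℤ) ^ (m - 1 - j : ℕ) : ℤ) : ℝ) =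
      (n : ℝ) ^ m * (digitExpansion n (padDigits d b) - digitExpansion n (padDigits d' b)) := by
  rw [pow_mul_digitExpansion_sub hn (padDigits_mem (s := Iio n) hd hb)
    (padDigits_mem (s := Iio n) hd' hb) fun j hj => by simp [padDigits, not_lt.2 hj],
    ← Fin.sum_univ_eq_sum_range (fun j => ((padDigits d b j : ℝ) - padDigits d' b j) *
      (n : ℝ) ^ (m - 1 - j))]
  push_cast
  simp [padDigits]

lemma injective_sum_mul_pow {G ι : Type*} {n : ℤ} (hn : n ≠ 0) {F : G → ι → ℤ}
    (hF : ∀ g g', (∀ i, n ∣ F g i - F g' i) → g = g') (m : ℕ) :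
    Function.Injective fun (t : Fin m → G) (i : ι) => ∑ j, F (t j) i * n ^ (m - 1 - j : ℕ) := by
  induction m with
  | zero => exact fun _ _ _ => Subsingleton.elim _ _
  | succ m ih =>
    set S := fun (s : Fin m → G) (i : ι) => ∑ j, F (s j) i * n ^ (m - 1 - j : ℕ)
    have hsplit : ∀ (s : Fin (m + 1) → G) (i : ι), ∑ j, F (s j) i * n ^ (m + 1 - 1 - j : ℕ) =
        n * S (Fin.init s) i + F (s (Fin.last m)) i := by
      intro s i
      rw [Fin.sum_univ_castSucc, Finset.mul_sum]
      congr 1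
      · refine Finset.sum_congr rfl fun j _ => ?_
        rw [show m + 1 - 1 - (j.castSucc : ℕ) = m - 1 - j + 1 by simp; omega, pow_succ]
        simp only [Fin.init]; ring
      · simp
    intro t t' h
    have hi : ∀ i, n * S (Fin.init t) i + F (t (Fin.last m)) i =
        n * S (Fin.init t') i + F (t' (Fin.last m)) i := fun i => by
      rw [← hsplit, ← hsplit]; exact congrFun h i
    have hlast : t (Fin.last m) = t' (Fin.last m) :=
      hF _ _ fun i => ⟨S (Fin.init t') i - S (Fin.init t) i, by linear_combination hi i⟩
    have hinit : Fin.init t = Fin.init t' :=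
      ih <| funext fun i => mul_left_cancel₀ hn (by simpa [hlast] using hi i)
    rw [← Fin.snoc_init_self t, ← Fin.snoc_init_self t', hinit, hlast]

lemma card_le_of_abs_sub_le {α ι : Type*} [Fintype ι] [DecidableEq ι] {P : Finset α}
    {Y : α → ι → ℤ} (hY : Set.InjOn Y P) {r : ℕ} (h : ∀ p ∈ P, ∀ q ∈ P, ∀ i, |Y p i - Y q i| ≤ r) :
    P.card ≤ (2 * r + 1) ^ Fintype.card ι := by
  rcases P.eq_empty_or_nonempty with rfl | ⟨p₀, hp₀⟩
  · simp
  calc P.card ≤ (Finset.Icc (-r : ι → ℤ) r).card := by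
        refine Finset.card_le_card_of_injOn (fun p => Y p - Y p₀) (fun p hp => ?_)
          fun p hp q hq hpq => hY hp hq (sub_left_injective hpq)
        rw [Finset.mem_coe, Finset.mem_Icc]
        exact ⟨fun i => (abs_le.1 (h p hp p₀ hp₀ i)).1, fun i => (abs_le.1 (h p hp p₀ hp₀ i)).2⟩
    _ = (2 * r + 1) ^ Fintype.card ι := by
        simp only [Pi.card_Icc, Pi.neg_apply, Pi.natCast_apply, Int.card_Icc, Finset.prod_const,
          Finset.card_univ]
        congr 1; omega

noncomputable def cantorPoint (n b : ℕ) {G : Type*} {m : ℕ} (d : G → ℕ) (t : Fin m → G) : ℝ :=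
  digitExpansion n (padDigits (d ∘ t) b)

lemma cantorPoint_mem {n b m : ℕ} {G : Type*} {A : Finset ℕ} {d : G → ℕ} (hd : ∀ g, d g ∈ A)
    (hb : b ∈ A) (t : Fin m → G) : cantorPoint n b d t ∈ digitCantor n A :=
  ⟨_, padDigits_mem (s := ↑A) (fun j => hd (t j)) hb, rfl⟩

section CantorPoints

variable {n k m b : ℕ} {a₀ : (Fin k → ZMod n) → ℕ} {a : (Fin k → ZMod n) → Fin k → ℕ}

lemma card_le_five_pow_of_close (hn : 2 ≤ n) (ha₀ : ∀ v, a₀ v < n) (ha : ∀ v i, a v i < n)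
    (hb : b < n) (hv : ∀ v, v = fun i => (a₀ v : ZMod n) - a v i) {δ : ℝ}
    (hm : (n : ℝ) ^ m * δ ≤ 1) {S : Set ℝ} (hS : Metric.IsSeparated (ENNReal.ofReal δ) S)
    {P : Finset (ℝ × (Fin m → Fin k → ZMod n))} (hPS : ∀ p ∈ P, p.1 ∈ S)
    (hclose₀ : ∀ p ∈ P, ∀ q ∈ P,
      |cantorPoint n b a₀ p.2 + p.1 - (cantorPoint n b a₀ q.2 + q.1)| ≤ δ)
    (hclose : ∀ p ∈ P, ∀ q ∈ P, ∀ i,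
      |cantorPoint n b (a · i) p.2 + p.1 - (cantorPoint n b (a · i) q.2 + q.1)| ≤ δ) :
    P.card ≤ 5 ^ k := by
  set Y : (Fin m → Fin k → ZMod n) → Fin k → ℤ :=
    fun t i => ∑ j, ((a₀ (t j) : ℤ) - a (t j) i) * (n : ℤ) ^ (m - 1 - j : ℕ)
  have hY : ∀ t i, (Y t i : ℝ) = n ^ m * (cantorPoint n b a₀ t - cantorPoint n b (a · i) t) :=
    fun t i => intCast_sum_eq_pow_mul_digitExpansion_sub hn (fun j => ha₀ _)
      (fun j => ha _ i) hb
  have hYinj : Function.Injective Y := by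
    refine injective_sum_mul_pow (by omega) (F := fun v i => (a₀ v : ℤ) - a v i)
      (fun v v' h => ?_) m
    rw [hv v, hv v']
    funext i
    simpa using ((ZMod.intCast_eq_intCast_iff_dvd_sub _ _ n).2 (h i)).symm
  have hsame : ∀ p ∈ P, ∀ q ∈ P, p.2 = q.2 → p = q := by
    intro p hp q hq ht
    have hpq := hclose₀ p hp q hq
    rw [ht, add_sub_add_left_eq_sub, ← Real.dist_eq] at hpq
    by_contra hne
    have hsep := hS (hPS p hp) (hPS q hq) fun h => hne (Prod.ext h ht)
    exact ((edist_le_ofReal (dist_nonneg.trans hpq)).2 hpq).not_gt hsep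
  have hbound : ∀ p ∈ P, ∀ q ∈ P, ∀ i, |Y p.2 i - Y q.2 i| ≤ (2 : ℕ) := by
    intro p hp q hq i
    have hgap : |(cantorPoint n b a₀ p.2 - cantorPoint n b (a · i) p.2) -
        (cantorPoint n b a₀ q.2 - cantorPoint n b (a · i) q.2)| ≤ 2 * δ := by
      have h₀ := abs_le.1 (hclose₀ p hp q hq)
      have hᵢ := abs_le.1 (hclose p hp q hq i)
      exact abs_le.2 ⟨by linarith [h₀.1, hᵢ.2], by linarith [h₀.2, hᵢ.1]⟩
    have : |(Y p.2 i : ℝ) - Y q.2 i| ≤ 2 := by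
      rw [hY, hY, ← mul_sub, abs_mul, abs_of_pos (by positivity)]
      calc (n : ℝ) ^ m * |_| ≤ n ^ m * (2 * δ) := by gcongr
        _ ≤ 2 := by linarith
    exact_mod_cast this
  simpa only [Fintype.card_fin] using card_le_of_abs_sub_le (P := P) (Y := fun p => Y p.2)
    (r := 2) (fun p hp q hq h => hsame p hp q hq (hYinj h)) hbound

theorem coverNumber_mul_pow_le (hn : 2 ≤ n) {A : Finset ℕ} (hAn : A ⊆ Finset.range n)
    (ha₀ : ∀ v, a₀ v ∈ A) (ha : ∀ v i, a v i ∈ A) (hv : ∀ v, v = fun i => (a₀ v : ZMod n) - a v i)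
    {E : Set ℝ} (hE : IsBounded E) {δ : ℝ} (hδ : 0 < δ) (hm : (n : ℝ) ^ m * δ ≤ 1) :
    coverNumber E δ * n ^ (k * m) ≤ 2 * 5 ^ k * coverNumber (digitCantor n A + E) δ ^ (k + 1) := by
  have : NeZero n := ⟨by omega⟩
  have hlt : ∀ c ∈ A, c < n := fun c hc => Finset.mem_range.1 (hAn hc)
  obtain ⟨S, hSE, hS, hES⟩ := exists_isSeparated_coverNumber_le hE hδ
  obtain ⟨C, hC, hCE⟩ := exists_card_eq_coverNumber ((isBounded_digitCantor hn hAn).add hE) hδ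
  choose! I hIC hI using fun y (hy : y ∈ digitCantor n A + E) => mem_iUnion₂.1 (hCE hy)
  set b := a₀ 0
  set pairs := S ×ˢ (Finset.univ : Finset (Fin m → Fin k → ZMod n))
  have hmem : ∀ d : (Fin k → ZMod n) → ℕ, (∀ v, d v ∈ A) → ∀ p ∈ pairs,
      cantorPoint n b d p.2 + p.1 ∈ digitCantor n A + E := fun d hd p hp =>
    add_mem_add (cantorPoint_mem hd (ha₀ 0) _) (hSE (Finset.mem_product.1 hp).1)
  set Φ : ℝ × (Fin m → Fin k → ZMod n) → ℝ × (Fin k → ℝ) := fun p =>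
    (I (cantorPoint n b a₀ p.2 + p.1), fun i => I (cantorPoint n b (a · i) p.2 + p.1))
  have hΦ : ∀ p ∈ pairs, Φ p ∈ C ×ˢ Fintype.piFinset fun _ => C := fun p hp =>
    Finset.mem_product.2 ⟨hIC _ (hmem _ ha₀ p hp),
      Fintype.mem_piFinset.2 fun i => hIC _ (hmem _ (ha · i) p hp)⟩
  have hdist : ∀ y ∈ digitCantor n A + E, ∀ y' ∈ digitCantor n A + E, I y = I y' →
      |y - y'| ≤ δ := fun y hy y' hy' h => by
    simpa [Real.dist_eq] using Real.dist_le_of_mem_Icc (hI y hy) (h ▸ hI y' hy')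
  have hfiber : ∀ y ∈ C ×ˢ Fintype.piFinset fun _ => C, (pairs.filter (Φ · = y)).card ≤ 5 ^ k := by
    intro y _
    refine card_le_five_pow_of_close hn (hlt _ <| ha₀ ·) (hlt _ <| ha · ·) (hlt _ (ha₀ 0)) hv hm
      hS (fun p hp => (Finset.mem_product.1 (Finset.mem_filter.1 hp).1).1) ?_ ?_
    · intro p hp q hq
      obtain ⟨hp', rfl⟩ := Finset.mem_filter.1 hp
      obtain ⟨hq', hpq⟩ := Finset.mem_filter.1 hq
      exact hdist _ (hmem _ ha₀ p hp') _ (hmem _ ha₀ q hq') (congrArg Prod.fst hpq).symm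
    · intro p hp q hq i
      obtain ⟨hp', rfl⟩ := Finset.mem_filter.1 hp
      obtain ⟨hq', hpq⟩ := Finset.mem_filter.1 hq
      exact hdist _ (hmem _ (ha · i) p hp') _ (hmem _ (ha · i) q hq')
        (congrFun (congrArg Prod.snd hpq) i).symm
  have hcount := Finset.card_le_mul_card_image_of_maps_to hΦ _ hfiber
  rw [Finset.card_product, Finset.card_product, Fintype.card_piFinset_const, Finset.card_univ,
    Fintype.card_fun, Fintype.card_fun, ZMod.card, Fintype.card_fin, Fintype.card_fin, hC]
    at hcount
  calc coverNumber E δ * n ^ (k * m) ≤ 2 * S.card * n ^ (k * m) := Nat.mul_le_mul_right _ hES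
    _ = 2 * (S.card * (n ^ k) ^ m) := by ring
    _ ≤ 2 * (5 ^ k * (coverNumber (digitCantor n A + E) δ *
          coverNumber (digitCantor n A + E) δ ^ k)) := Nat.mul_le_mul_left _ hcount
    _ = 2 * 5 ^ k * coverNumber (digitCantor n A + E) δ ^ (k + 1) := by ring

theorem coverNumber_mul_one_div_pow_le (hn : 2 ≤ n) {A : Finset ℕ} (hAn : A ⊆ Finset.range n)
    (ha₀ : ∀ v, a₀ v ∈ A) (ha : ∀ v i, a v i ∈ A) (hv : ∀ v, v = fun i => (a₀ v : ZMod n) - a v i)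
    {E : Set ℝ} (hE : IsBounded E) {δ : ℝ} (hδ : 0 < δ) (hδ₁ : δ ≤ 1) :
    (coverNumber E δ : ℝ) * (1 / δ) ^ k ≤
      2 * (5 * n) ^ k * coverNumber (digitCantor n A + E) δ ^ (k + 1) := by
  set m := Nat.log n ⌊1 / δ⌋₊
  have hfloor : ⌊1 / δ⌋₊ ≠ 0 := (Nat.floor_pos.2 (one_le_one_div hδ hδ₁)).ne'
  have hm : (n : ℝ) ^ m * δ ≤ 1 := by
    rw [← le_div_iff₀ hδ]
    calc (n : ℝ) ^ m ≤ ⌊1 / δ⌋₊ := by exact_mod_cast Nat.pow_log_le_self n hfloor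
      _ ≤ 1 / δ := Nat.floor_le (by positivity)
  have hm₁ : 1 / δ ≤ (n : ℝ) ^ (m + 1) :=
    (Nat.lt_floor_add_one _).le.trans (by exact_mod_cast Nat.lt_pow_succ_log_self (by omega) _)
  have hcount := coverNumber_mul_pow_le hn hAn ha₀ ha hv hE hδ hm
  calc (coverNumber E δ : ℝ) * (1 / δ) ^ k ≤ coverNumber E δ * ((n : ℝ) ^ (m + 1)) ^ k := by
        gcongr
    _ = ((coverNumber E δ * n ^ (k * m) : ℕ) : ℝ) * n ^ k := by
        push_cast; ring
    _ ≤ ((2 * 5 ^ k * coverNumber (digitCantor n A + E) δ ^ (k + 1) : ℕ) : ℝ) * n ^ k := by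
        gcongr
    _ = 2 * (5 * n) ^ k * coverNumber (digitCantor n A + E) δ ^ (k + 1) := by
        push_cast; ring

lemma le_liminf_of_eventually_mul_add_le {α : Type*} {l : Filter α} {f g h : α → ℝ} {c d : ℝ}
    (hc : 0 < c) (hf : IsBoundedUnder (· ≥ ·) l f) (hg : IsCoboundedUnder (· ≥ ·) l g)
    (hh : Tendsto h l (𝓝 0)) (hfg : ∀ᶠ x in l, c * f x + d ≤ g x + h x) :
    c * liminf f l + d ≤ liminf g l := by
  refine le_of_forall_lt_imp_le_of_dense fun y hy => le_liminf_of_le hg ?_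
  set ε := (c * liminf f l + d - y) / 2
  have hε : 0 < ε := by simp only [ε]; linarith
  have hfε : (y + ε - d) / c < liminf f l := by
    rw [div_lt_iff₀ hc]; simp only [ε]; linarith
  filter_upwards [eventually_lt_of_lt_liminf hfε hf, hh.eventually (gt_mem_nhds hε), hfg]
    with x hfx hhx hfgx
  rw [div_lt_iff₀ hc] at hfx
  linarith

lemma tendsto_log_one_div_nhdsGT_zero :
    Tendsto (fun δ : ℝ => Real.log (1 / δ)) (𝓝[>] 0) atTop := by
  simp only [one_div, Real.log_inv]
  exact tendsto_neg_atBot_atTop.comp Real.tendsto_log_nhdsGT_zero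

lemma exists_eventually_log_coverNumber_div_le {X : Set ℝ} (hX : IsBounded X) :
    ∃ C, ∀ᶠ δ in 𝓝[>] (0 : ℝ), Real.log (coverNumber X δ) / Real.log (1 / δ) ≤ C := by
  obtain ⟨a, b, hab⟩ : ∃ a b : ℝ, X ⊆ Icc a b := ⟨_, _, hX.subset_Icc_sInf_sSup⟩
  set M := |b - a| + 2
  refine ⟨Real.log M + 1, ?_⟩
  filter_upwards [Ioo_mem_nhdsGT one_pos, tendsto_log_one_div_nhdsGT_zero.eventually_ge_atTop 1]
    with δ ⟨hδ, hδ₁⟩ hL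
  have hN : (coverNumber X δ : ℝ) ≤ M * (1 / δ) := by
    calc (coverNumber X δ : ℝ) ≤ ⌈(b - a) / δ⌉₊ + 1 := by
          exact_mod_cast coverNumber_le_of_subset_Icc hδ hab
      _ ≤ |b - a| / δ + 2 := by
          have : (⌈(b - a) / δ⌉₊ : ℝ) < |b - a| / δ + 1 :=
            (Nat.cast_le.2 (Nat.ceil_mono (by gcongr; exact le_abs_self _))).trans_lt
              (Nat.ceil_lt_add_one (by positivity))
          linarith
      _ ≤ M * (1 / δ) := by
          have : 2 ≤ 2 / δ := by rw [le_div_iff₀ hδ]; linarith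
          simp only [M]; rw [add_mul, mul_one_div, mul_one_div]; linarith
  have hM : 0 ≤ Real.log M := Real.log_nonneg (by simp only [M]; linarith [abs_nonneg (b - a)])
  have hlog : Real.log (coverNumber X δ) ≤ Real.log M + Real.log (1 / δ) := by
    rcases (Nat.zero_le (coverNumber X δ)).eq_or_lt with h0 | hpos
    · rw [← h0, Nat.cast_zero, Real.log_zero]; linarith
    · rw [← Real.log_mul (by positivity) (by positivity)]
      exact Real.log_le_log (by exact_mod_cast hpos) hN
  rw [div_le_iff₀ (by linarith)]
  nlinarith

theorem le_lowerMinkDim_of_coverNumber_le {X Y : Set ℝ} (hX : IsBounded X) (hXne : X.Nonempty)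
    (hY : IsBounded Y) {k : ℕ} {K : ℝ} (hK : 0 < K)
    (h : ∀ᶠ δ in 𝓝[>] (0 : ℝ), (coverNumber X δ : ℝ) * (1 / δ) ^ k ≤
      K * coverNumber Y δ ^ (k + 1)) :
    k / (k + 1) + lowerMinkDim X / (k + 1) ≤ lowerMinkDim Y := by
  have hL := tendsto_log_one_div_nhdsGT_zero
  have hLpos : ∀ᶠ δ in 𝓝[>] (0 : ℝ), 0 < Real.log (1 / δ) := hL.eventually_gt_atTop 0
  obtain ⟨C, hC⟩ := exists_eventually_log_coverNumber_div_le hY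
  have hmain := le_liminf_of_eventually_mul_add_le (c := 1 / (k + 1)) (d := k / (k + 1))
    (f := fun δ => Real.log (coverNumber X δ) / Real.log (1 / δ))
    (h := fun δ => Real.log K / ((k + 1) * Real.log (1 / δ))) (by positivity)
    (isBoundedUnder_of_eventually_ge (a := 0) (hLpos.mono fun δ hδ =>
      div_nonneg (Real.log_natCast_nonneg _) hδ.le))
    (isCoboundedUnder_ge_of_eventually_le _ hC)
    (tendsto_const_nhds.div_atTop (hL.const_mul_atTop (by positivity))) ?_
  · calc (k : ℝ) / (k + 1) + lowerMinkDim X / (k + 1)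
          = 1 / (k + 1) * lowerMinkDim X + k / (k + 1) := by ring
      _ ≤ lowerMinkDim Y := hmain
  filter_upwards [h, hLpos, self_mem_nhdsWithin] with δ hδ hL (hδ₀ : 0 < δ)
  have hNX : (1 : ℝ) ≤ coverNumber X δ := by exact_mod_cast one_le_coverNumber hX hXne hδ₀
  have hNY : (0 : ℝ) < coverNumber Y δ := by
    by_contra! h0
    have : (coverNumber Y δ : ℝ) = 0 := le_antisymm h0 (Nat.cast_nonneg _)
    rw [this, zero_pow (Nat.succ_ne_zero k), mul_zero] at hδ
    exact (mul_pos (by linarith) (pow_pos (by positivity) k)).not_ge hδ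
  have hlog := Real.log_le_log (by positivity) hδ
  rw [Real.log_mul (by positivity) (by positivity), Real.log_mul hK.ne' (by positivity),
    Real.log_pow, Real.log_pow] at hlog
  field_simp
  push_cast at hlog
  linarith

theorem stmt11_general (n : ℕ) (hn : 3 ≤ n) (A : Finset ℕ)
    (hAn : A ⊆ Finset.range n) (k : ℕ)
    (hdiff : {v : Fin k → ZMod n | ∃ a₀ ∈ A, ∃ a : Fin k → ℕ,
        (∀ i, a i ∈ A) ∧ v = fun i => ((a₀ : ZMod n) - (a i : ZMod n))} = Set.univ)
    (E : Set ℝ) (hEne : E.Nonempty) (hEc : IsCompact E) :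
    (k : ℝ) / (k + 1) + lowerMinkDim E / (k + 1) ≤ lowerMinkDim (digitCantor n A + E) := by
  choose a₀ ha₀ a ha hv using fun v => Set.eq_univ_iff_forall.1 hdiff v
  have hn₂ : 2 ≤ n := by omega
  refine le_lowerMinkDim_of_coverNumber_le hEc.isBounded hEne
    ((isBounded_digitCantor hn₂ hAn).add hEc.isBounded) (K := 2 * (5 * n) ^ k)
    (by positivity) ?_
  filter_upwards [Ioc_mem_nhdsGT one_pos] with δ ⟨hδ, hδ₁⟩
  exact coverNumber_mul_one_div_pow_le hn₂ hAn ha₀ ha hv hEc.isBounded hδ hδ₁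

theorem stmt11 (n : ℕ) (hn : 3 ≤ n) (A : Finset ℕ) (hA : A.Nonempty)
    (hAn : A ⊆ Finset.range n) (k : ℕ) (hk : 1 ≤ k)
    (hdiff : {v : Fin k → ZMod n | ∃ a₀ ∈ A, ∃ a : Fin k → ℕ,
        (∀ i, a i ∈ A) ∧ v = fun i => ((a₀ : ZMod n) - (a i : ZMod n))} = Set.univ)
    (E : Set ℝ) (hEne : E.Nonempty) (hEc : IsCompact E) :
    (k : ℝ) / (k + 1) + lowerMinkDim E / (k + 1) ≤ lowerMinkDim (digitCantor n A + E) :=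
  stmt11_general n hn A hAn k hdiff E hEne hEc
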